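/- For a Rademacher vector z ∈ R^d and symmetric matrix A ∈ R^{d×d}, the variance of zᵀ A z equals 2 Σ_{i≠j} A_{ij}², i.e., V[zᵀ A z] = 2(‖A‖_F² − Σᵢ A_{ii}²). -/

import Mathlib

open MeasureTheory ProbabilityTheory Matrix

/-- The quadratic form `zᵀ A z`. -/
noncomputable def quadForm {d : ℕ} (A : Matrix (Fin d) (Fin d) ℝ) (z : Fin d → ℝ) : ℝ :=
  z ⬝ᵥ A.mulVec z

/-- The squared Frobenius norm `‖A‖_F²`. -/
def frobSq {ι : Type*} [Fintype ι] (M : Matrix ι ι ℝ) : ℝ := ∑ i, ∑ j, (M i j) ^ 2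


set_option maxHeartbeats 1000000

private lemma sumT1 {d : ℕ} (A : Matrix (Fin d) (Fin d) ℝ) :
    ∑ i, ∑ k, ∑ j, ∑ l, (A i j * A k l) *
        ((if i = j then (1:ℝ) else 0) * (if k = l then 1 else 0))
        = (∑ i, A i i) ^ 2 := by
  simp only [mul_ite, ite_mul, mul_one, mul_zero, one_mul, zero_mul,
    Finset.sum_ite_irrel, Finset.sum_const_zero, Finset.sum_ite_eq, Finset.sum_ite_eq',
    Finset.mem_univ, if_true]
  rw [sq, Finset.sum_mul_sum]

private lemma sumT2 {d : ℕ} (A : Matrix (Fin d) (Fin d) ℝ) :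
    ∑ i, ∑ k, ∑ j, ∑ l, (A i j * A k l) *
        ((if i = k then (1:ℝ) else 0) * (if j = l then 1 else 0))
        = frobSq A := by
  simp only [mul_ite, ite_mul, mul_one, mul_zero, one_mul, zero_mul,
    Finset.sum_ite_irrel, Finset.sum_const_zero, Finset.sum_ite_eq, Finset.sum_ite_eq',
    Finset.mem_univ, if_true, frobSq, sq]

private lemma sumT3 {d : ℕ} (A : Matrix (Fin d) (Fin d) ℝ) (hA' : ∀ i j, A j i = A i j) :
    ∑ i, ∑ k, ∑ j, ∑ l, (A i j * A k l) *
        ((if i = l then (1:ℝ) else 0) * (if j = k then 1 else 0))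
        = frobSq A := by
  simp only [mul_ite, ite_mul, mul_one, mul_zero, one_mul, zero_mul,
    Finset.sum_ite_irrel, Finset.sum_const_zero, Finset.sum_ite_eq, Finset.sum_ite_eq',
    Finset.mem_univ, if_true, frobSq, sq]
  exact Finset.sum_congr rfl fun i _ => Finset.sum_congr rfl fun j _ => by rw [hA' i j]

private lemma sumT4 {d : ℕ} (A : Matrix (Fin d) (Fin d) ℝ) :
    ∑ i, ∑ k, ∑ j, ∑ l, (A i j * A k l) *
        (if i = j ∧ i = k ∧ i = l then (1:ℝ) else 0)
        = ∑ i, A i i ^ 2 := by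
  have hsplit : ∀ (p q : Prop) [Decidable p] [Decidable q],
      (if p ∧ q then (1:ℝ) else 0) = (if p then 1 else 0) * (if q then 1 else 0) := by
    intro p q _ _
    by_cases hp : p <;> by_cases hq : q <;> simp [hp, hq]
  simp only [hsplit, mul_ite, ite_mul, mul_one, mul_zero, one_mul, zero_mul,
    Finset.sum_ite_irrel, Finset.sum_const_zero, Finset.sum_ite_eq, Finset.sum_ite_eq',
    Finset.mem_univ, if_true, sq]

private lemma sumSplit {d : ℕ} (A : Matrix (Fin d) (Fin d) ℝ) :
    ∑ i, ∑ k, ∑ j, ∑ l, (A i j * A k l) *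
        ((if i = j then (1:ℝ) else 0) * (if k = l then 1 else 0)
        + (if i = k then 1 else 0) * (if j = l then 1 else 0)
        + (if i = l then 1 else 0) * (if j = k then 1 else 0)
        - 2 * (if i = j ∧ i = k ∧ i = l then 1 else 0))
        = (∑ i, ∑ k, ∑ j, ∑ l, (A i j * A k l) *
            ((if i = j then (1:ℝ) else 0) * (if k = l then 1 else 0)))
          + (∑ i, ∑ k, ∑ j, ∑ l, (A i j * A k l) *
            ((if i = k then (1:ℝ) else 0) * (if j = l then 1 else 0)))
          + (∑ i, ∑ k, ∑ j, ∑ l, (A i j * A k l) *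
            ((if i = l then (1:ℝ) else 0) * (if j = k then 1 else 0)))
          - 2 * (∑ i, ∑ k, ∑ j, ∑ l, (A i j * A k l) *
            (if i = j ∧ i = k ∧ i = l then (1:ℝ) else 0)) := by
  have hsum4 : ∀ (F G : Fin d → Fin d → Fin d → Fin d → ℝ),
      (∑ i, ∑ k, ∑ j, ∑ l, (F i k j l + G i k j l))
      = (∑ i, ∑ k, ∑ j, ∑ l, F i k j l) + (∑ i, ∑ k, ∑ j, ∑ l, G i k j l) := by
    intros F G; simp [Finset.sum_add_distrib]
  have hsub4 : ∀ (F G : Fin d → Fin d → Fin d → Fin d → ℝ),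
      (∑ i, ∑ k, ∑ j, ∑ l, (F i k j l - G i k j l))
      = (∑ i, ∑ k, ∑ j, ∑ l, F i k j l) - (∑ i, ∑ k, ∑ j, ∑ l, G i k j l) := by
    intros F G; simp [Finset.sum_sub_distrib]
  have hmul4 : ∀ (F : Fin d → Fin d → Fin d → Fin d → ℝ),
      (∑ i, ∑ k, ∑ j, ∑ l, 2 * F i k j l)
      = 2 * (∑ i, ∑ k, ∑ j, ∑ l, F i k j l) := by
    intros F; simp [Finset.mul_sum]
  have hstep : ∑ i, ∑ k, ∑ j, ∑ l, (A i j * A k l) *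
      ((if i = j then (1:ℝ) else 0) * (if k = l then 1 else 0)
      + (if i = k then 1 else 0) * (if j = l then 1 else 0)
      + (if i = l then 1 else 0) * (if j = k then 1 else 0)
      - 2 * (if i = j ∧ i = k ∧ i = l then 1 else 0))
      = ∑ i, ∑ k, ∑ j, ∑ l,
      (((A i j * A k l) * ((if i = j then (1:ℝ) else 0) * (if k = l then 1 else 0))
      + (A i j * A k l) * ((if i = k then (1:ℝ) else 0) * (if j = l then 1 else 0))
      + (A i j * A k l) * ((if i = l then (1:ℝ) else 0) * (if j = k then 1 else 0)))
      - 2 * ((A i j * A k l) * (if i = j ∧ i = k ∧ i = l then (1:ℝ) else 0))) :=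
    Finset.sum_congr rfl fun i _ => Finset.sum_congr rfl fun k _ =>
      Finset.sum_congr rfl fun j _ => Finset.sum_congr rfl fun l _ => by ring
  rw [hstep, hsub4, hsum4, hsum4, hmul4]

/-- For a Rademacher vector `z` and symmetric `A`,
`V[zᵀ A z] = 2 Σ_{i≠j} A_{ij}² = 2(‖A‖_F² − Σᵢ A_{ii}²)`. -/
theorem stmt2 {d : ℕ} {Ω : Type*} [MeasurableSpace Ω] (μ : Measure Ω) [IsProbabilityMeasure μ]
    (A : Matrix (Fin d) (Fin d) ℝ) (hA : A.IsSymm)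
    (z : Ω → Fin d → ℝ)
    (hmeas : ∀ i, Measurable fun ω => z ω i)
    (hval : ∀ ω i, z ω i = 1 ∨ z ω i = -1)
    (hprob : ∀ i, μ {ω | z ω i = 1} = 1/2)
    (hindep : iIndepFun (fun i ω => z ω i) μ) :
    variance (fun ω => quadForm A (z ω)) μ = 2 * (frobSq A - ∑ i, (A i i) ^ 2) := by
  classical
  have hsq : ∀ ω i, z ω i * z ω i = 1 := by
    intro ω i; rcases hval ω i with h | h <;> simp [h]
  have habs : ∀ ω i, |z ω i| = 1 := by
    intro ω i; rcases hval ω i with h | h <;> simp [h]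
  have hA' : ∀ i j, A j i = A i j := fun i j => (hA.apply j i).symm
  -- integrability of bounded measurable functions
  have hbd : ∀ (g : Ω → ℝ) (C : ℝ), Measurable g → (∀ ω, |g ω| ≤ C) → Integrable g μ := by
    intro g C hg hb
    exact ⟨hg.aestronglyMeasurable,
      HasFiniteIntegral.of_bounded (C := C) (Filter.Eventually.of_forall fun ω => by
        simpa [Real.norm_eq_abs] using hb ω)⟩
  have hintS : ∀ S : Finset (Fin d), Integrable (fun ω => ∏ s ∈ S, z ω s) μ := by
    intro S
    refine hbd _ 1 (Finset.measurable_prod S fun i _ => hmeas i) fun ω => ?_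
    rw [Finset.abs_prod]
    simp [habs]
  -- mean zero
  have hE1 : ∀ i, ∫ ω, z ω i ∂μ = 0 := by
    intro i
    have hms : MeasurableSet {ω | z ω i = 1} := hmeas i (measurableSet_singleton 1)
    have hrepr : (fun ω => z ω i)
        = fun ω => Set.indicator {ω | z ω i = 1} (fun _ => (2:ℝ)) ω - 1 := by
      funext ω
      by_cases h : z ω i = 1
      · simp only [Set.indicator_apply, Set.mem_setOf_eq, h, if_true]
        norm_num
      · have h' := (hval ω i).resolve_left h
        simp only [Set.indicator_apply, Set.mem_setOf_eq, h, if_false]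
        rw [h']; norm_num
    rw [hrepr, integral_sub ((integrable_const (2:ℝ)).indicator hms) (integrable_const 1),
      integral_indicator_const _ hms, integral_const]
    rw [measureReal_def, hprob i]
    simp [ENNReal.toReal_div]
  -- product over any nonempty finset has zero mean
  have hP : ∀ S : Finset (Fin d), (∫ ω, ∏ s ∈ S, z ω s ∂μ) = if S = ∅ then 1 else 0 := by
    intro S
    induction S using Finset.induction_on with
    | empty => simp
    | @insert a s ha ih =>
      have hind : IndepFun (fun ω => ∏ j ∈ s, z ω j) (fun ω => z ω a) μ := by
        have h := hindep.indepFun_finsetProd_of_notMem (fun i => hmeas i) ha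
        have he : (∏ j ∈ s, fun ω => z ω j) = fun ω => ∏ j ∈ s, z ω j := by
          funext ω; simp
        rwa [he] at h
      have h1 : ∫ ω, ∏ s' ∈ insert a s, z ω s' ∂μ
          = ∫ ω, (∏ j ∈ s, z ω j) * z ω a ∂μ := by
        congr 1; funext ω; rw [Finset.prod_insert ha]; ring
      have h2 := hind.integral_mul_eq_mul_integral (hintS s).aestronglyMeasurable
        (hbd _ 1 (hmeas a) fun ω => le_of_eq (habs ω a)).aestronglyMeasurable
      rw [h1]
      rw [show (fun ω => (∏ j ∈ s, z ω j) * z ω a)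
        = (fun ω => ∏ j ∈ s, z ω j) * (fun ω => z ω a) from rfl] at *
      rw [h2, hE1 a]
      simp [Finset.insert_ne_empty]
  -- integrability of pair and quadruple products
  have hI2 : ∀ a b : Fin d, Integrable (fun ω => z ω a * z ω b) μ := by
    intro a b
    refine hbd _ 1 ((hmeas a).mul (hmeas b)) fun ω => ?_
    rw [abs_mul, habs, habs]; norm_num
  have hI4 : ∀ a b c e : Fin d, Integrable (fun ω => z ω a * z ω b * z ω c * z ω e) μ := by
    intro a b c e
    refine hbd _ 1 ((((hmeas a).mul (hmeas b)).mul (hmeas c)).mul (hmeas e)) fun ω => ?_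
    rw [abs_mul, abs_mul, abs_mul, habs, habs, habs, habs]; norm_num
  -- second moments
  have hE2 : ∀ a b : Fin d, ∫ ω, z ω a * z ω b ∂μ = if a = b then 1 else 0 := by
    intro a b
    by_cases hab : a = b
    · subst hab
      rw [if_pos rfl, show (fun ω => z ω a * z ω a) = fun _ => (1:ℝ) from
        funext fun ω => hsq ω a]
      simp
    · rw [if_neg hab]
      have h := hP {a, b}
      rw [if_neg (by simp)] at h
      rw [← h]
      congr 1; funext ω
      rw [Finset.prod_pair hab]
  have h4 : ∀ i j k l : Fin d, i ≠ j → i ≠ k → i ≠ l → j ≠ k → j ≠ l → k ≠ l →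
      ∫ ω, z ω i * z ω j * z ω k * z ω l ∂μ = 0 := by
    intro i j k l hij hik hil hjk hjl hkl
    have h := hP {i, j, k, l}
    rw [if_neg (by simp)] at h
    rw [← h]
    congr 1; funext ω
    rw [show ({i, j, k, l} : Finset (Fin d)) = insert i (insert j ({k, l} : Finset (Fin d))) from rfl,
      Finset.prod_insert (by simp [hij, hik, hil]),
      Finset.prod_insert (by simp [hjk, hjl]), Finset.prod_pair hkl]
    ring
  -- fourth moments
  have hE4 : ∀ i j k l : Fin d, ∫ ω, z ω i * z ω j * z ω k * z ω l ∂μ =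
      (if i = j then (1:ℝ) else 0) * (if k = l then 1 else 0)
      + (if i = k then 1 else 0) * (if j = l then 1 else 0)
      + (if i = l then 1 else 0) * (if j = k then 1 else 0)
      - 2 * (if i = j ∧ i = k ∧ i = l then 1 else 0) := by
    intro i j k l
    by_cases hij : i = j
    · subst hij
      rw [show (fun ω => z ω i * z ω i * z ω k * z ω l) = fun ω => z ω k * z ω l from
        funext fun ω => by linear_combination (z ω k * z ω l) * hsq ω i]
      rw [hE2 k l]
      by_cases hkl : k = l
      · subst hkl
        by_cases hik : i = k <;> simp [hik] <;> norm_num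
      · by_cases hik : i = k <;> by_cases hil : i = l <;> simp_all
    · by_cases hkl : k = l
      · subst hkl
        rw [show (fun ω => z ω i * z ω j * z ω k * z ω k) = fun ω => z ω i * z ω j from
          funext fun ω => by linear_combination (z ω i * z ω j) * hsq ω k]
        rw [hE2 i j, if_neg hij]
        by_cases hik : i = k <;> by_cases hjk : j = k <;> simp_all
      · by_cases hik : i = k
        · subst hik
          rw [show (fun ω => z ω i * z ω j * z ω i * z ω l) = fun ω => z ω j * z ω l from
            funext fun ω => by linear_combination (z ω j * z ω l) * hsq ω i]
          rw [hE2 j l]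
          by_cases hjl : j = l <;> simp_all
        · by_cases hil : i = l
          · subst hil
            rw [show (fun ω => z ω i * z ω j * z ω k * z ω i) = fun ω => z ω j * z ω k from
              funext fun ω => by linear_combination (z ω j * z ω k) * hsq ω i]
            rw [hE2 j k]
            by_cases hjk : j = k <;> simp_all
          · by_cases hjk : j = k
            · subst hjk
              rw [show (fun ω => z ω i * z ω j * z ω j * z ω l) = fun ω => z ω i * z ω l from
                funext fun ω => by linear_combination (z ω i * z ω l) * hsq ω j]
              rw [hE2 i l, if_neg hil]
              simp_all
            · by_cases hjl : j = l
              · subst hjl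
                rw [show (fun ω => z ω i * z ω j * z ω k * z ω j) = fun ω => z ω i * z ω k from
                  funext fun ω => by linear_combination (z ω i * z ω k) * hsq ω j]
                rw [hE2 i k, if_neg hik]
                simp_all
              · rw [h4 i j k l hij hik hil hjk hjl hkl]
                simp_all
  -- the quadratic form as a double sum
  set f : Ω → ℝ := fun ω => quadForm A (z ω) with hf
  have hf' : ∀ ω, f ω = ∑ i, ∑ j, A i j * (z ω i * z ω j) := by
    intro ω
    simp only [hf, quadForm, dotProduct, mulVec, Finset.mul_sum]
    exact Finset.sum_congr rfl fun i _ => Finset.sum_congr rfl fun j _ => by ring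
  have hfm : Measurable f := by
    rw [show f = fun ω => ∑ i, ∑ j, A i j * (z ω i * z ω j) from funext hf']
    exact Finset.measurable_sum _ fun i _ => Finset.measurable_sum _ fun j _ =>
      ((hmeas i).mul (hmeas j)).const_mul _
  have hCbd : ∀ ω, |f ω| ≤ ∑ i, ∑ j, |A i j| := by
    intro ω
    rw [hf' ω]
    calc |∑ i, ∑ j, A i j * (z ω i * z ω j)|
        ≤ ∑ i, |∑ j, A i j * (z ω i * z ω j)| := Finset.abs_sum_le_sum_abs _ _
      _ ≤ ∑ i, ∑ j, |A i j * (z ω i * z ω j)| :=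
          Finset.sum_le_sum fun i _ => Finset.abs_sum_le_sum_abs _ _
      _ = ∑ i, ∑ j, |A i j| := by
          refine Finset.sum_congr rfl fun i _ => Finset.sum_congr rfl fun j _ => ?_
          rw [abs_mul, abs_mul, habs, habs]; ring
  have hmem : MemLp f 2 μ :=
    MemLp.of_bound hfm.aestronglyMeasurable _
      (Filter.Eventually.of_forall fun ω => by
        simpa [Real.norm_eq_abs] using hCbd ω)
  -- first moment of f
  have hI : ∫ ω, f ω ∂μ = ∑ i, A i i := by
    have h1 : ∫ ω, f ω ∂μ = ∑ i, ∑ j, A i j * (if i = j then (1:ℝ) else 0) := by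
      rw [show f = fun ω => ∑ i, ∑ j, A i j * (z ω i * z ω j) from funext hf']
      rw [integral_finset_sum _ fun i _ =>
        integrable_finset_sum _ fun j _ => (hI2 i j).const_mul (A i j)]
      refine Finset.sum_congr rfl fun i _ => ?_
      rw [integral_finset_sum _ fun j _ => (hI2 i j).const_mul (A i j)]
      refine Finset.sum_congr rfl fun j _ => ?_
      rw [integral_const_mul, hE2 i j]
    rw [h1]
    simp
  -- second moment of f
  have hJ : ∫ ω, (f ω) ^ 2 ∂μ = (∑ i, A i i) ^ 2 + 2 * frobSq A - 2 * ∑ i, A i i ^ 2 := by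
    have hsqf : ∀ ω, (f ω) ^ 2 = ∑ i, ∑ k, ∑ j, ∑ l,
        (A i j * A k l) * (z ω i * z ω j * z ω k * z ω l) := by
      intro ω
      rw [hf' ω, sq, Finset.sum_mul_sum]
      refine Finset.sum_congr rfl fun i _ => Finset.sum_congr rfl fun k _ => ?_
      rw [Finset.sum_mul_sum]
      exact Finset.sum_congr rfl fun j _ => Finset.sum_congr rfl fun l _ => by ring
    have h1 : ∫ ω, (f ω) ^ 2 ∂μ = ∑ i, ∑ k, ∑ j, ∑ l, (A i j * A k l) *
        ((if i = j then (1:ℝ) else 0) * (if k = l then 1 else 0)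
        + (if i = k then 1 else 0) * (if j = l then 1 else 0)
        + (if i = l then 1 else 0) * (if j = k then 1 else 0)
        - 2 * (if i = j ∧ i = k ∧ i = l then 1 else 0)) := by
      simp only [hsqf]
      rw [integral_finset_sum _ fun i _ => integrable_finset_sum _ fun k _ =>
        integrable_finset_sum _ fun j _ => integrable_finset_sum _ fun l _ =>
        (hI4 i j k l).const_mul _]
      refine Finset.sum_congr rfl fun i _ => ?_
      rw [integral_finset_sum _ fun k _ => integrable_finset_sum _ fun j _ =>
        integrable_finset_sum _ fun l _ => (hI4 i j k l).const_mul _]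
      refine Finset.sum_congr rfl fun k _ => ?_
      rw [integral_finset_sum _ fun j _ =>
        integrable_finset_sum _ fun l _ => (hI4 i j k l).const_mul _]
      refine Finset.sum_congr rfl fun j _ => ?_
      rw [integral_finset_sum _ fun l _ => (hI4 i j k l).const_mul _]
      refine Finset.sum_congr rfl fun l _ => ?_
      rw [integral_const_mul, hE4 i j k l]
    rw [h1]
    have hT1 : ∑ i, ∑ k, ∑ j, ∑ l, (A i j * A k l) *
        ((if i = j then (1:ℝ) else 0) * (if k = l then 1 else 0))
        = (∑ i, A i i) ^ 2 := sumT1 A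
    have hT2 : ∑ i, ∑ k, ∑ j, ∑ l, (A i j * A k l) *
        ((if i = k then (1:ℝ) else 0) * (if j = l then 1 else 0))
        = frobSq A := sumT2 A
    have hT3 : ∑ i, ∑ k, ∑ j, ∑ l, (A i j * A k l) *
        ((if i = l then (1:ℝ) else 0) * (if j = k then 1 else 0))
        = frobSq A := sumT3 A hA'
    have hT4 : ∑ i, ∑ k, ∑ j, ∑ l, (A i j * A k l) *
        (if i = j ∧ i = k ∧ i = l then (1:ℝ) else 0)
        = ∑ i, A i i ^ 2 := sumT4 A
    calc ∑ i, ∑ k, ∑ j, ∑ l, (A i j * A k l) *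
        ((if i = j then (1:ℝ) else 0) * (if k = l then 1 else 0)
        + (if i = k then 1 else 0) * (if j = l then 1 else 0)
        + (if i = l then 1 else 0) * (if j = k then 1 else 0)
        - 2 * (if i = j ∧ i = k ∧ i = l then 1 else 0))
        = (∑ i, ∑ k, ∑ j, ∑ l, (A i j * A k l) *
            ((if i = j then (1:ℝ) else 0) * (if k = l then 1 else 0)))
          + (∑ i, ∑ k, ∑ j, ∑ l, (A i j * A k l) *
            ((if i = k then (1:ℝ) else 0) * (if j = l then 1 else 0)))
          + (∑ i, ∑ k, ∑ j, ∑ l, (A i j * A k l) *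
            ((if i = l then (1:ℝ) else 0) * (if j = k then 1 else 0)))
          - 2 * (∑ i, ∑ k, ∑ j, ∑ l, (A i j * A k l) *
            (if i = j ∧ i = k ∧ i = l then (1:ℝ) else 0)) := by
          exact sumSplit A
      _ = (∑ i, A i i) ^ 2 + 2 * frobSq A - 2 * ∑ i, A i i ^ 2 := by
          rw [hT1, hT2, hT3, hT4]; ring
  -- conclude
  rw [variance_eq_sub hmem]
  have hpow : (fun ω => f ω) ^ 2 = fun ω => (f ω) ^ 2 := by
    funext ω; simp
  calc (∫ ω, (f ^ 2) ω ∂μ) - (∫ ω, f ω ∂μ) ^ 2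
      = (∫ ω, (f ω) ^ 2 ∂μ) - (∫ ω, f ω ∂μ) ^ 2 := rfl
    _ = 2 * (frobSq A - ∑ i, A i i ^ 2) := by rw [hJ, hI]; ring
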